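/- Let μ₁ and μ₂ be Borel probability measures on Σ, let 0 < α ≤ 1 and suppose κ := κ_α(M,μ₁) < 1 and κ_α(M,μ₂) < 1. Let ν₁ and ν₂ be Borel probability measures on X that are stationary for L_{M,μ₁} and L_{M,μ₂} respectively (i.e. ∫ L_{M,μᵢ}φ dνᵢ = ∫ φ dνᵢ for all continuous φ). Then for every φ ∈ H_α(X): |∫_X φ dν₁ − ∫_X φ dν₂| ≤ (‖μ₁ − μ₂‖_TV/(1−κ)) · v_α(φ), where ‖μ₁ − μ₂‖_TV denotes the total variation norm of the signed measure μ₁ − μ₂. -/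

import Mathlib

/-!
Write `Δ ψ = ∫ ψ dν₁ - ∫ ψ dν₂` and `Lᵢ` for the transfer operator of `μᵢ`. Stationarity gives
`Δ ψ = Δ (L₁ ψ) + ∫ (L₁ ψ - L₂ ψ) dν₂`, and the last integral is at most `‖μ₁ - μ₂‖ v_α(ψ)` because
`v_α(ψ)` bounds the oscillation of `ψ`. Since `v_α(L₁ ψ) ≤ κ v_α(ψ)` and `|Δ ψ| ≤ v_α(ψ)`, induction
gives `|Δ φ| ≤ (‖μ₁ - μ₂‖ / (1 - κ) + κⁿ) v_α(φ)` for every `n`; let `n → ∞`.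
-/

open MeasureTheory ENNReal

/-- The `α`-Hölder seminorm `v_α(φ) = diam(X)^α ⬝ sup_{x ≠ y} |φ x - φ y| / d(x,y)^α`,
valued in `ℝ≥0∞`. -/
noncomputable def eHolderSemi {X : Type*} [PseudoMetricSpace X] (α : ℝ) (φ : X → ℝ) : ℝ≥0∞ :=
  (EMetric.diam (Set.univ : Set X)) ^ α *
    ⨆ pq : { pq : X × X // pq.1 ≠ pq.2 },
      ENNReal.ofReal (|φ pq.val.1 - φ pq.val.2| / dist pq.val.1 pq.val.2 ^ α)

/-- The Markov (transfer) operator `(L_{M,μ} φ)(p) = ∫_Σ φ(M(x,p)) dμ(x)`. -/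
noncomputable def transferOp {S X : Type*} [MeasurableSpace S] (μ : Measure S)
    (M : S × X → X) (φ : X → ℝ) : X → ℝ :=
  fun p => ∫ x, φ (M (x, p)) ∂μ

/-- `κ_α(M,μ) = sup_{p ≠ q} ∫_Σ (d(M(x,p),M(x,q))/d(p,q))^α dμ(x)`. -/
noncomputable def kappaAlpha {S X : Type*} [MeasurableSpace S] [PseudoMetricSpace X]
    (μ : Measure S) (α : ℝ) (M : S × X → X) : ℝ≥0∞ :=
  ⨆ pq : { pq : X × X // pq.1 ≠ pq.2 },
    ∫⁻ x, ENNReal.ofReal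
      ((dist (M (x, pq.val.1)) (M (x, pq.val.2)) / dist pq.val.1 pq.val.2) ^ α) ∂μ

/-- The total variation norm `‖μ₁ − μ₂‖` of the difference of two finite measures. -/
noncomputable def tvNorm {S : Type*} [MeasurableSpace S]
    (μ₁ μ₂ : Measure S) [IsFiniteMeasure μ₁] [IsFiniteMeasure μ₂] : ℝ≥0∞ :=
  (μ₁.toSignedMeasure - μ₂.toSignedMeasure).totalVariation Set.univ

lemma le_div_one_sub_mul_of_le_add_mul {ι : Type*} {P : ι → Prop} {F c : ι → ℝ≥0∞}
    {L : ι → ι} {b κ : ℝ≥0∞} (hκ : κ < 1) (hPL : ∀ i, P i → P (L i))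
    (hF : ∀ i, P i → F i ≤ c i) (hFL : ∀ i, P i → F i ≤ F (L i) + b * c i)
    (hcL : ∀ i, P i → c (L i) ≤ κ * c i) {i : ι} (hi : P i) (hci : c i ≠ ⊤) :
    F i ≤ b / (1 - κ) * c i := by
  have h1κ : 1 - κ ≠ 0 := (tsub_pos_of_lt hκ).ne'
  have hfix : b / (1 - κ) * κ + b = b / (1 - κ) := by
    nth_rw 2 [← ENNReal.div_mul_cancel (b := b) h1κ (tsub_le_self.trans_lt ENNReal.one_lt_top).ne]
    rw [← mul_add, add_tsub_cancel_of_le hκ.le, mul_one]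
  have hiter : ∀ n i, P i → F i ≤ (b / (1 - κ) + κ ^ n) * c i := by
    intro n
    induction n with
    | zero => exact fun i hi => (hF i hi).trans (le_mul_of_one_le_left' (by simp))
    | succ n ih =>
      intro i hi
      calc F i ≤ F (L i) + b * c i := hFL i hi
        _ ≤ (b / (1 - κ) + κ ^ n) * (κ * c i) + b * c i := by
          gcongr
          exact (ih _ (hPL i hi)).trans (by gcongr; exact hcL i hi)
        _ = (b / (1 - κ) * κ + b + κ ^ (n + 1)) * c i := by ring
        _ = (b / (1 - κ) + κ ^ (n + 1)) * c i := by rw [hfix]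
  have hlim : Filter.Tendsto (fun n => (b / (1 - κ) + κ ^ n) * c i) Filter.atTop
      (nhds (b / (1 - κ) * c i)) := by
    simpa using ENNReal.Tendsto.mul_const
      (tendsto_const_nhds.add (ENNReal.tendsto_pow_atTop_nhds_zero_of_lt_one hκ)) (.inr hci)
  exact ge_of_tendsto' hlim fun n => hiter n i hi

noncomputable def holderRatioSup {X : Type*} [PseudoMetricSpace X] (α : ℝ) (φ : X → ℝ) :
    ℝ≥0∞ :=
  ⨆ pq : { pq : X × X // pq.1 ≠ pq.2 },
    ENNReal.ofReal (|φ pq.val.1 - φ pq.val.2| / dist pq.val.1 pq.val.2 ^ α)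

lemma eHolderSemi_eq {X : Type*} [PseudoMetricSpace X] (α : ℝ) (φ : X → ℝ) :
    eHolderSemi α φ = Metric.ediam (Set.univ : Set X) ^ α * holderRatioSup α φ :=
  rfl

lemma ofReal_abs_sub_le_holderRatioSup_mul {X : Type*} [MetricSpace X] {α : ℝ}
    (hα : 0 ≤ α) (φ : X → ℝ) (x y : X) :
    ENNReal.ofReal |φ x - φ y| ≤ holderRatioSup α φ * edist x y ^ α := by
  rcases eq_or_ne x y with rfl | hxy
  · simp
  have hd : 0 < dist x y ^ α := Real.rpow_pos_of_pos (dist_pos.2 hxy) α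
  have hratio := le_iSup (fun pq : { pq : X × X // pq.1 ≠ pq.2 } =>
    ENNReal.ofReal (|φ pq.val.1 - φ pq.val.2| / dist pq.val.1 pq.val.2 ^ α)) ⟨(x, y), hxy⟩
  rwa [ENNReal.ofReal_div_of_pos hd, ENNReal.div_le_iff (by simpa using hd) ENNReal.ofReal_ne_top,
    ← ENNReal.ofReal_rpow_of_nonneg dist_nonneg hα, ← edist_dist] at hratio

lemma ofReal_abs_sub_le_eHolderSemi {X : Type*} [MetricSpace X] {α : ℝ} (hα : 0 ≤ α)
    (φ : X → ℝ) (x y : X) : ENNReal.ofReal |φ x - φ y| ≤ eHolderSemi α φ := by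
  rw [eHolderSemi_eq, mul_comm]
  exact (ofReal_abs_sub_le_holderRatioSup_mul hα φ x y).trans <| by
    gcongr
    exact Metric.edist_le_ediam_of_mem (Set.mem_univ x) (Set.mem_univ y)

lemma abs_sub_le_toReal_eHolderSemi {X : Type*} [MetricSpace X] {α : ℝ} (hα : 0 ≤ α)
    {φ : X → ℝ} (hφ : eHolderSemi α φ ≠ ⊤) (x y : X) :
    |φ x - φ y| ≤ (eHolderSemi α φ).toReal :=
  (ENNReal.ofReal_le_iff_le_toReal hφ).1 (ofReal_abs_sub_le_eHolderSemi hα φ x y)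

section TransferOperator

variable {S X : Type*} [MeasurableSpace S] [MetricSpace X] {μ : Measure S} {α : ℝ}
  {M : S × X → X}

lemma lintegral_edist_rpow_le_kappaAlpha_mul (hα : 0 ≤ α) {p q : X} (hpq : p ≠ q) :
    ∫⁻ x, edist (M (x, p)) (M (x, q)) ^ α ∂μ ≤ kappaAlpha μ α M * edist p q ^ α := by
  have hd : 0 < dist p q := dist_pos.2 hpq
  have hsplit : ∀ x, edist (M (x, p)) (M (x, q)) ^ α =
      ENNReal.ofReal ((dist (M (x, p)) (M (x, q)) / dist p q) ^ α) * edist p q ^ α := by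
    intro x
    rw [edist_dist, edist_dist, ENNReal.ofReal_rpow_of_nonneg dist_nonneg hα,
      ENNReal.ofReal_rpow_of_nonneg dist_nonneg hα,
      ← ENNReal.ofReal_mul (Real.rpow_nonneg (div_nonneg dist_nonneg hd.le) α),
      Real.div_rpow dist_nonneg hd.le, div_mul_cancel₀ _ (Real.rpow_pos_of_pos hd α).ne']
  simp_rw [hsplit]
  rw [lintegral_mul_const' _ _ (ENNReal.rpow_ne_top_of_nonneg hα (edist_ne_top p q))]
  gcongr
  exact le_iSup (fun pq : { pq : X × X // pq.1 ≠ pq.2 } => ∫⁻ x, ENNReal.ofReal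
    ((dist (M (x, pq.val.1)) (M (x, pq.val.2)) / dist pq.val.1 pq.val.2) ^ α) ∂μ) ⟨(p, q), hpq⟩

variable [TopologicalSpace S] [OpensMeasurableSpace S] [CompactSpace S] [IsFiniteMeasure μ]

lemma holderRatioSup_transferOp_le (hα : 0 ≤ α) (hM : Continuous M) {ψ : X → ℝ}
    (hψ : Continuous ψ) :
    holderRatioSup α (transferOp μ M ψ) ≤ kappaAlpha μ α M * holderRatioSup α ψ := by
  refine iSup_le fun ⟨⟨p, q⟩, hpq⟩ => ?_
  have hd : 0 < dist p q ^ α := Real.rpow_pos_of_pos (dist_pos.2 hpq) α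
  have hint : ∀ p, Integrable (fun x => ψ (M (x, p))) μ := fun p =>
    (hψ.comp (hM.comp (Continuous.prodMk_left p))).integrable_of_hasCompactSupport
      (.of_compactSpace _)
  rw [ENNReal.ofReal_div_of_pos hd, ENNReal.div_le_iff (by simpa using hd) ENNReal.ofReal_ne_top,
    ← ENNReal.ofReal_rpow_of_nonneg dist_nonneg hα, ← edist_dist]
  calc ENNReal.ofReal |transferOp μ M ψ p - transferOp μ M ψ q|
      = ‖∫ x, (ψ (M (x, p)) - ψ (M (x, q))) ∂μ‖ₑ := by
        rw [integral_sub (hint p) (hint q), Real.enorm_eq_ofReal_abs]; rfl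
    _ ≤ ∫⁻ x, ‖ψ (M (x, p)) - ψ (M (x, q))‖ₑ ∂μ := enorm_integral_le_lintegral_enorm _
    _ ≤ ∫⁻ x, holderRatioSup α ψ * edist (M (x, p)) (M (x, q)) ^ α ∂μ := by
        gcongr with x
        rw [Real.enorm_eq_ofReal_abs]
        exact ofReal_abs_sub_le_holderRatioSup_mul hα ψ _ _
    _ = holderRatioSup α ψ * ∫⁻ x, edist (M (x, p)) (M (x, q)) ^ α ∂μ := by
        refine lintegral_const_mul _ ?_
        exact (((hM.comp (Continuous.prodMk_left p)).edist
          (hM.comp (Continuous.prodMk_left q))).measurable.pow_const α)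
    _ ≤ holderRatioSup α ψ * (kappaAlpha μ α M * edist p q ^ α) := by
        gcongr
        exact lintegral_edist_rpow_le_kappaAlpha_mul hα hpq
    _ = kappaAlpha μ α M * holderRatioSup α ψ * edist p q ^ α := by ring

lemma eHolderSemi_transferOp_le (hα : 0 ≤ α) (hM : Continuous M) {ψ : X → ℝ}
    (hψ : Continuous ψ) :
    eHolderSemi α (transferOp μ M ψ) ≤ kappaAlpha μ α M * eHolderSemi α ψ := by
  rw [eHolderSemi_eq, eHolderSemi_eq, mul_left_comm]
  gcongr
  exact holderRatioSup_transferOp_le hα hM hψ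

lemma continuous_transferOp [LocallyCompactSpace X] (hM : Continuous M) {ψ : X → ℝ}
    (hψ : Continuous ψ) : Continuous (transferOp μ M ψ) := by
  have := continuous_parametric_integral_of_continuous (μ := μ)
    (f := fun p x => ψ (M (x, p))) (hψ.comp (hM.comp continuous_swap)) isCompact_univ
  unfold transferOp
  simpa only [Measure.restrict_univ] using this

end TransferOperator

lemma abs_integral_sub_integral_le_of_abs_sub_le {X : Type*} [MeasurableSpace X]
    {ν₁ ν₂ : Measure X} [IsProbabilityMeasure ν₁] [IsProbabilityMeasure ν₂] {ψ : X → ℝ}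
    {B : ℝ} (h₁ : Integrable ψ ν₁) (h₂ : Integrable ψ ν₂) (hB : ∀ y z, |ψ y - ψ z| ≤ B) :
    |∫ y, ψ y ∂ν₁ - ∫ y, ψ y ∂ν₂| ≤ B := by
  have hle : ∀ (ρ₁ ρ₂ : Measure X) [IsProbabilityMeasure ρ₁] [IsProbabilityMeasure ρ₂],
      Integrable ψ ρ₁ → Integrable ψ ρ₂ → (∀ y z, ψ y - ψ z ≤ B) →
      ∫ y, ψ y ∂ρ₁ - B ≤ ∫ y, ψ y ∂ρ₂ := by
    intro ρ₁ ρ₂ _ _ h₁ h₂ hB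
    have hz : ∀ z, ∫ y, ψ y ∂ρ₁ - B ≤ ψ z := fun z => by
      have := integral_mono h₁ (integrable_const (ψ z + B)) fun y => by linarith [hB y z]
      simp only [integral_const, probReal_univ, one_smul] at this
      linarith
    simpa using integral_mono (integrable_const _) h₂ hz
  have hB' : ∀ y z, ψ y - ψ z ≤ B := fun y z => (abs_le.1 (hB y z)).2
  rw [abs_sub_le_iff]
  constructor
  · linarith [hle ν₁ ν₂ h₁ h₂ hB']
  · linarith [hle ν₂ ν₁ h₂ h₁ hB']

section TotalVariation

variable {S : Type*} [MeasurableSpace S] {μ₁ μ₂ : Measure S}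

lemma tvNorm_ne_top [IsFiniteMeasure μ₁] [IsFiniteMeasure μ₂] : tvNorm μ₁ μ₂ ≠ ⊤ := by
  rw [tvNorm, SignedMeasure.totalVariation, Measure.add_apply]
  exact ENNReal.add_ne_top.2 ⟨measure_ne_top _ _, measure_ne_top _ _⟩

lemma abs_integral_sub_integral_le_tvNorm_mul [IsFiniteMeasure μ₁] [IsFiniteMeasure μ₂]
    {g : S → ℝ} {B : ℝ} (hg : StronglyMeasurable g) (hB : ∀ x, |g x| ≤ B) :
    |∫ x, g x ∂μ₁ - ∫ x, g x ∂μ₂| ≤ (tvNorm μ₁ μ₂).toReal * B := by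
  set s := μ₁.toSignedMeasure - μ₂.toSignedMeasure
  set p := s.toJordanDecomposition.posPart
  set n := s.toJordanDecomposition.negPart
  have hint : ∀ (ρ : Measure S) [IsFiniteMeasure ρ], Integrable g ρ := fun ρ _ =>
    (integrable_const B).mono' hg.aestronglyMeasurable (.of_forall hB)
  have hbound : ∀ (ρ : Measure S) [IsFiniteMeasure ρ], |∫ x, g x ∂ρ| ≤ B * ρ.real Set.univ :=
    fun ρ _ => norm_integral_le_of_norm_le_const (μ := ρ) (f := g) (.of_forall hB)
  have hjordan : μ₁ + n = μ₂ + p := by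
    rw [← Measure.toSignedMeasure_eq_toSignedMeasure_iff, Measure.toSignedMeasure_add,
      Measure.toSignedMeasure_add, add_comm _ p.toSignedMeasure,
      ← sub_eq_sub_iff_add_eq_add]
    exact s.toSignedMeasure_toJordanDecomposition.symm
  have hdiff : ∫ x, g x ∂μ₁ - ∫ x, g x ∂μ₂ = ∫ x, g x ∂p - ∫ x, g x ∂n := by
    have := congrArg (fun ρ => ∫ x, g x ∂ρ) hjordan
    simp only [integral_add_measure (hint _) (hint _)] at this
    linarith
  have htv : (tvNorm μ₁ μ₂).toReal = p.real Set.univ + n.real Set.univ := by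
    rw [tvNorm, SignedMeasure.totalVariation, Measure.add_apply,
      ENNReal.toReal_add (measure_ne_top _ _) (measure_ne_top _ _)]
    rfl
  rw [hdiff, htv]
  calc |∫ x, g x ∂p - ∫ x, g x ∂n| ≤ |∫ x, g x ∂p| + |∫ x, g x ∂n| := abs_sub _ _
    _ ≤ B * p.real Set.univ + B * n.real Set.univ := add_le_add (hbound p) (hbound n)
    _ = (p.real Set.univ + n.real Set.univ) * B := by ring

lemma abs_integral_sub_integral_le_tvNorm_mul_of_abs_sub_le [IsProbabilityMeasure μ₁]
    [IsProbabilityMeasure μ₂] {g : S → ℝ} {B : ℝ} (hg : StronglyMeasurable g)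
    (hB : ∀ x y, |g x - g y| ≤ B) :
    |∫ x, g x ∂μ₁ - ∫ x, g x ∂μ₂| ≤ (tvNorm μ₁ μ₂).toReal * B := by
  obtain ⟨x₀⟩ : Nonempty S := nonempty_of_isProbabilityMeasure μ₁
  have hshift := abs_integral_sub_integral_le_tvNorm_mul (μ₁ := μ₁) (μ₂ := μ₂)
    (g := fun x => g x - g x₀) (hg.sub stronglyMeasurable_const) (fun x => hB x x₀)
  have hint : ∀ (ρ : Measure S) [IsProbabilityMeasure ρ], Integrable g ρ := fun ρ _ =>
    (integrable_const (|g x₀| + B)).mono' hg.aestronglyMeasurable (.of_forall fun x => by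
      linarith [abs_sub_abs_le_abs_sub (g x) (g x₀), hB x x₀, Real.norm_eq_abs (g x)])
  rwa [integral_sub (hint μ₁) (integrable_const _), integral_sub (hint μ₂) (integrable_const _),
    integral_const, integral_const, probReal_univ, probReal_univ, one_smul,
    sub_sub_sub_cancel_right] at hshift

end TotalVariation

section StationaryMeasures

variable {S X : Type*} [TopologicalSpace S] [CompactSpace S] [MeasurableSpace S]
  [OpensMeasurableSpace S] [MetricSpace X] [CompactSpace X] [MeasurableSpace X]
  [OpensMeasurableSpace X] {ν₁ ν₂ : Measure X} [IsProbabilityMeasure ν₂] {α : ℝ} {ψ : X → ℝ}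

lemma ofReal_abs_integral_sub_integral_le_eHolderSemi [IsProbabilityMeasure ν₁] (hα : 0 ≤ α)
    (hψ : Continuous ψ) :
    ENNReal.ofReal |∫ y, ψ y ∂ν₁ - ∫ y, ψ y ∂ν₂| ≤ eHolderSemi α ψ := by
  rcases eq_or_ne (eHolderSemi α ψ) ⊤ with he | he
  · exact he ▸ le_top
  rw [ENNReal.ofReal_le_iff_le_toReal he]
  exact abs_integral_sub_integral_le_of_abs_sub_le
    (hψ.integrable_of_hasCompactSupport (.of_compactSpace _))
    (hψ.integrable_of_hasCompactSupport (.of_compactSpace _))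
    (abs_sub_le_toReal_eHolderSemi hα he)

lemma ofReal_abs_integral_sub_integral_le_of_stationary {μ₁ μ₂ : Measure S}
    [IsProbabilityMeasure μ₁] [IsProbabilityMeasure μ₂] {M : S × X → X} (hM : Continuous M)
    (hα : 0 ≤ α) (hψ : Continuous ψ) (he : eHolderSemi α ψ ≠ ⊤)
    (h₁ : ∫ p, transferOp μ₁ M ψ p ∂ν₁ = ∫ p, ψ p ∂ν₁)
    (h₂ : ∫ p, transferOp μ₂ M ψ p ∂ν₂ = ∫ p, ψ p ∂ν₂) :
    ENNReal.ofReal |∫ y, ψ y ∂ν₁ - ∫ y, ψ y ∂ν₂| ≤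
      ENNReal.ofReal |∫ p, transferOp μ₁ M ψ p ∂ν₁ - ∫ p, transferOp μ₁ M ψ p ∂ν₂| +
        tvNorm μ₁ μ₂ * eHolderSemi α ψ := by
  set B := (tvNorm μ₁ μ₂).toReal * (eHolderSemi α ψ).toReal
  have hpointwise : ∀ p, |transferOp μ₁ M ψ p - transferOp μ₂ M ψ p| ≤ B := fun p =>
    abs_integral_sub_integral_le_tvNorm_mul_of_abs_sub_le
      (hψ.comp (hM.comp (Continuous.prodMk_left p))).stronglyMeasurable
      fun _ _ => abs_sub_le_toReal_eHolderSemi hα he _ _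
  have hint : ∀ (μ : Measure S) [IsFiniteMeasure μ], Integrable (transferOp μ M ψ) ν₂ :=
    fun _ _ => (continuous_transferOp hM hψ).integrable_of_hasCompactSupport (.of_compactSpace _)
  have hdiff : |∫ p, transferOp μ₁ M ψ p ∂ν₂ - ∫ p, transferOp μ₂ M ψ p ∂ν₂| ≤ B := by
    rw [← integral_sub (hint μ₁) (hint μ₂)]
    simpa using norm_integral_le_of_norm_le_const (μ := ν₂)
      (f := fun p => transferOp μ₁ M ψ p - transferOp μ₂ M ψ p) (.of_forall hpointwise)
  have hreal : |∫ y, ψ y ∂ν₁ - ∫ y, ψ y ∂ν₂| ≤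
      |∫ p, transferOp μ₁ M ψ p ∂ν₁ - ∫ p, transferOp μ₁ M ψ p ∂ν₂| + B := by
    rw [← h₁, ← h₂]
    exact (abs_sub_le _ _ _).trans (add_le_add_right hdiff _)
  calc ENNReal.ofReal |∫ y, ψ y ∂ν₁ - ∫ y, ψ y ∂ν₂|
      ≤ ENNReal.ofReal (|∫ p, transferOp μ₁ M ψ p ∂ν₁ - ∫ p, transferOp μ₁ M ψ p ∂ν₂| + B) :=
        ENNReal.ofReal_le_ofReal hreal
    _ = _ := by
      rw [ENNReal.ofReal_add (abs_nonneg _) (by positivity), ENNReal.ofReal_mul (by positivity),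
        ENNReal.ofReal_toReal tvNorm_ne_top, ENNReal.ofReal_toReal he]

end StationaryMeasures

theorem stmt10_general {S X : Type*} [MetricSpace S] [CompactSpace S]
    [MeasurableSpace S] [BorelSpace S]
    [MetricSpace X] [CompactSpace X] [MeasurableSpace X] [BorelSpace X]
    (μ₁ μ₂ : Measure S) [IsProbabilityMeasure μ₁] [IsProbabilityMeasure μ₂]
    (M : S × X → X) (hM : Continuous M)
    (α : ℝ) (hα0 : 0 < α)
    (hκ₁ : kappaAlpha μ₁ α M < 1)
    (ν₁ ν₂ : Measure X) (hν₁ : IsProbabilityMeasure ν₁) (hν₂ : IsProbabilityMeasure ν₂)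
    (hstat₁ : ∀ φ : C(X, ℝ), ∫ p, transferOp μ₁ M (⇑φ) p ∂ν₁ = ∫ p, φ p ∂ν₁)
    (hstat₂ : ∀ φ : C(X, ℝ), ∫ p, transferOp μ₂ M (⇑φ) p ∂ν₂ = ∫ p, φ p ∂ν₂)
    (φ : X → ℝ) (hφc : Continuous φ) (hφ : eHolderSemi α φ < ⊤) :
    ENNReal.ofReal |∫ p, φ p ∂ν₁ - ∫ p, φ p ∂ν₂| ≤
      (tvNorm μ₁ μ₂ / (1 - kappaAlpha μ₁ α M)) * eHolderSemi α φ := by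
  refine le_div_one_sub_mul_of_le_add_mul (P := fun ψ => Continuous ψ ∧ eHolderSemi α ψ ≠ ⊤)
    (F := fun ψ => ENNReal.ofReal |∫ p, ψ p ∂ν₁ - ∫ p, ψ p ∂ν₂|) (L := transferOp μ₁ M)
    hκ₁ ?_ ?_ ?_ ?_ ⟨hφc, hφ.ne⟩ hφ.ne
  · rintro ψ ⟨hψ, he⟩
    refine ⟨continuous_transferOp hM hψ, ne_top_of_le_ne_top ?_
      (eHolderSemi_transferOp_le hα0.le hM hψ)⟩
    exact ENNReal.mul_ne_top (hκ₁.trans ENNReal.one_lt_top).ne he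
  · exact fun ψ hψ => ofReal_abs_integral_sub_integral_le_eHolderSemi hα0.le hψ.1
  · exact fun ψ ⟨hψ, he⟩ => ofReal_abs_integral_sub_integral_le_of_stationary hM hα0.le hψ he
      (hstat₁ ⟨ψ, hψ⟩) (hstat₂ ⟨ψ, hψ⟩)
  · exact fun ψ hψ => eHolderSemi_transferOp_le hα0.le hM hψ.1

/-- If `κ := κ_α(M,μ₁) < 1` and `κ_α(M,μ₂) < 1`, and `ν₁`, `ν₂` are stationary
probability measures for `L_{M,μ₁}` and `L_{M,μ₂}` respectively, then for every
`φ ∈ H_α(X)`, `|∫ φ dν₁ − ∫ φ dν₂| ≤ (‖μ₁ − μ₂‖_TV/(1−κ)) · v_α(φ)`. -/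
theorem stmt10 {S X : Type*} [MetricSpace S] [CompactSpace S]
    [MeasurableSpace S] [BorelSpace S]
    [MetricSpace X] [CompactSpace X] [MeasurableSpace X] [BorelSpace X]
    (μ₁ μ₂ : Measure S) [IsProbabilityMeasure μ₁] [IsProbabilityMeasure μ₂]
    (M : S × X → X) (hM : Continuous M)
    (α : ℝ) (hα0 : 0 < α) (hα1 : α ≤ 1)
    (hκ₁ : kappaAlpha μ₁ α M < 1) (hκ₂ : kappaAlpha μ₂ α M < 1)
    (ν₁ ν₂ : Measure X) (hν₁ : IsProbabilityMeasure ν₁) (hν₂ : IsProbabilityMeasure ν₂)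
    (hstat₁ : ∀ φ : C(X, ℝ), ∫ p, transferOp μ₁ M (⇑φ) p ∂ν₁ = ∫ p, φ p ∂ν₁)
    (hstat₂ : ∀ φ : C(X, ℝ), ∫ p, transferOp μ₂ M (⇑φ) p ∂ν₂ = ∫ p, φ p ∂ν₂)
    (φ : X → ℝ) (hφc : Continuous φ) (hφ : eHolderSemi α φ < ⊤) :
    ENNReal.ofReal |∫ p, φ p ∂ν₁ - ∫ p, φ p ∂ν₂| ≤
      (tvNorm μ₁ μ₂ / (1 - kappaAlpha μ₁ α M)) * eHolderSemi α φ :=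
  stmt10_general μ₁ μ₂ M hM α hα0 hκ₁ ν₁ ν₂ hν₁ hν₂ hstat₁ hstat₂ φ hφc hφ
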